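/- arXiv:1602.02377 — 2 statements merged into one kernel-verified Lean document; each statement's English description precedes it below -/
import Mathlib

section
/- Bellman–Ford-style global relaxation fixed point characterizes true shortest weighted distances: let G be a finite positively-weighted graph with source s, and let w : V → ℝ≥0 ∪ {∞} satisfy w(s) = 0 and, for every non-source vertex u reachable from s, w(u) = min over in-neighbors x of u of (w(x) + weight(x,u)), with w(u) = ∞ for unreachable u. Then w(u) equals the minimum total weight over all paths from s to u, for every u. -/
/-!
Every walk from `s` is at least as heavy as `d` of its endpoint, because the fixed-point
equation makes `d` a potential: `d b ≤ d a + weight a b` along every arc. Conversely, at a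
vertex `u ≠ s` with `d u < ⊤` the infimum over the finitely many in-neighbours is attained
at some `x`, and positivity of the weights gives `d x < d u`. Following such tight arcs
backwards strictly decreases `d`, so on a finite vertex set it ends at `s` and traces a walk
of weight exactly `d u`.
-/

/-- The total weight of a directed walk `s :: l` (consecutive vertices joined by
arcs), as an element of `ℝ≥0∞`. -/
noncomputable def dwalkWeight {V : Type*} (weight : V → V → ENNReal) (s : V) (l : List V) :
    ENNReal :=
  (((s :: l).zip l).map fun p => weight p.1 p.2).sum

section Walks

variable {V : Type*} (weight : V → V → ENNReal)

@[simp]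
lemma dwalkWeight_nil (a : V) : dwalkWeight weight a [] = 0 := by
  simp [dwalkWeight]

@[simp]
lemma dwalkWeight_cons (a b : V) (l : List V) :
    dwalkWeight weight a (b :: l) = weight a b + dwalkWeight weight b l := by
  simp [dwalkWeight]

lemma dwalkWeight_append_singleton (b : V) :
    ∀ (a : V) (l : List V), dwalkWeight weight a (l ++ [b]) =
      dwalkWeight weight a l + weight ((a :: l).getLast (List.cons_ne_nil a l)) b
  | a, [] => by simp
  | a, c :: l => by
    rw [List.cons_append, dwalkWeight_cons, dwalkWeight_append_singleton b c l,
      dwalkWeight_cons, List.getLast_cons (List.cons_ne_nil c l), add_assoc]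

lemma List.IsChain.cons_append_singleton {R : V → V → Prop} {a b : V} {l : List V}
    (hl : List.IsChain R (a :: l)) (hb : R ((a :: l).getLast (List.cons_ne_nil a l)) b) :
    List.IsChain R (a :: (l ++ [b])) := by
  rw [← List.cons_append]
  refine hl.append (.singleton b) ?_
  simp_all [List.getLast?_eq_some_getLast]

lemma le_add_dwalkWeight_of_le_add_weight {Adj : V → V → Prop} {d : V → ENNReal}
    (hd : ∀ a b, Adj a b → d b ≤ d a + weight a b) :
    ∀ (a : V) (l : List V), List.IsChain Adj (a :: l) →
      d ((a :: l).getLast (List.cons_ne_nil a l)) ≤ d a + dwalkWeight weight a l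
  | a, [], _ => by simp
  | a, b :: l, hl => by
    obtain ⟨hab, hl⟩ := List.isChain_cons_cons.mp hl
    rw [List.getLast_cons (List.cons_ne_nil b l), dwalkWeight_cons, ← add_assoc]
    calc _ ≤ d b + dwalkWeight weight b l := le_add_dwalkWeight_of_le_add_weight hd b l hl
      _ ≤ d a + weight a b + dwalkWeight weight b l := by gcongr; exact hd a b hab

end Walks

structure IsRelaxationFixedPoint {V : Type*} (Adj : V → V → Prop) (weight : V → V → ENNReal)
    (s : V) (d : V → ENNReal) : Prop where
  source : d s = 0
  relax : ∀ u, u ≠ s → Relation.ReflTransGen Adj s u →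
    d u = sInf {y | ∃ x, Adj x u ∧ y = d x + weight x u}
  unreachable : ∀ u, ¬ Relation.ReflTransGen Adj s u → d u = ⊤

namespace IsRelaxationFixedPoint

variable {V : Type*} {Adj : V → V → Prop} {weight : V → V → ENNReal} {s : V} {d : V → ENNReal}

lemma reachable_of_ne_top (h : IsRelaxationFixedPoint Adj weight s d) {u : V} (hu : d u ≠ ⊤) :
    Relation.ReflTransGen Adj s u :=
  not_not.mp (mt (h.unreachable u) hu)

lemma le_add_weight (h : IsRelaxationFixedPoint Adj weight s d) {a b : V} (hab : Adj a b) :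
    d b ≤ d a + weight a b := by
  by_cases ha : d a = ⊤
  · simp [ha]
  by_cases hbs : b = s
  · simp [hbs, h.source]
  rw [h.relax b hbs ((h.reachable_of_ne_top ha).tail hab)]
  exact sInf_le ⟨a, hab, rfl⟩

lemma exists_tight_arc [Finite V] (h : IsRelaxationFixedPoint Adj weight s d)
    (hpos : ∀ a b, Adj a b → weight a b ≠ 0) {u : V} (hus : u ≠ s) (hu : d u ≠ ⊤) :
    ∃ x, Adj x u ∧ d x + weight x u = d u ∧ d x < d u := by
  set S := {y | ∃ x, Adj x u ∧ y = d x + weight x u}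
  have hdu : d u = sInf S := h.relax u hus (h.reachable_of_ne_top hu)
  have hS : S.Nonempty := by
    by_contra hS
    rw [Set.not_nonempty_iff_eq_empty.mp hS, sInf_empty] at hdu
    exact hu hdu
  have hfin : S.Finite :=
    (Set.finite_range fun x => d x + weight x u).subset fun _ ⟨x, _, hy⟩ => ⟨x, hy.symm⟩
  obtain ⟨x, hxu, hx⟩ : sInf S ∈ S := hS.csInf_mem hfin
  rw [← hdu] at hx
  have hxtop : d x ≠ ⊤ := fun hxtop => hu (by simp [hx, hxtop])
  exact ⟨x, hxu, hx.symm, hx ▸ ENNReal.lt_add_right hxtop (hpos x u hxu)⟩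

lemma exists_walk_dwalkWeight_eq [Finite V] (h : IsRelaxationFixedPoint Adj weight s d)
    (hpos : ∀ a b, Adj a b → weight a b ≠ 0) (u : V) (hu : d u ≠ ⊤) :
    ∃ l, List.IsChain Adj (s :: l) ∧ (s :: l).getLast (List.cons_ne_nil s l) = u ∧
      dwalkWeight weight s l = d u := by
  induction u using (Finite.wellFounded_of_trans_of_irrefl fun a b => d a < d b).induction with
  | _ u ih =>
    by_cases hus : u = s
    · exact ⟨[], .singleton s, hus.symm, by simp [hus, h.source]⟩
    obtain ⟨x, hxu, hx, hlt⟩ := h.exists_tight_arc hpos hus hu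
    obtain ⟨l, hl, rfl, hlx⟩ := ih x hlt hlt.ne_top
    refine ⟨l ++ [u], hl.cons_append_singleton hxu, List.getLast_append_singleton (s :: l), ?_⟩
    rw [dwalkWeight_append_singleton, hlx, hx]

end IsRelaxationFixedPoint

/-- Bellman–Ford fixed point: in a finite directed graph with strictly positive
edge weights, if `d s = 0`, `d u = ⊤` for `u` unreachable from `s`, and for
every reachable `u ≠ s` the value `d u` equals the infimum of `d x + weight x u`
over in-neighbours `x` of `u`, then `d u` is the minimum total weight over all
directed walks from `s` to `u`, for every `u`. -/
theorem relaxation_fixed_point_is_shortest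
    {V : Type*} [Fintype V] (Adj : V → V → Prop) (weight : V → V → ENNReal)
    (hw : ∀ a b, Adj a b → 0 < weight a b ∧ weight a b ≠ ⊤)
    (s : V) (d : V → ENNReal)
    (hds : d s = 0)
    (hfix : ∀ u, u ≠ s → Relation.ReflTransGen Adj s u →
      d u = sInf {y | ∃ x, Adj x u ∧ y = d x + weight x u})
    (hinf : ∀ u, ¬ Relation.ReflTransGen Adj s u → d u = ⊤) :
    ∀ u, d u = sInf {y | ∃ l : List V, List.Chain' Adj (s :: l) ∧
      (s :: l).getLast (List.cons_ne_nil s l) = u ∧ y = dwalkWeight weight s l} := by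
  have h : IsRelaxationFixedPoint Adj weight s d := ⟨hds, hfix, hinf⟩
  have hpos : ∀ a b, Adj a b → weight a b ≠ 0 := fun a b hab => (hw a b hab).1.ne'
  intro u
  apply le_antisymm
  · refine le_sInf ?_
    rintro _ ⟨l, hl, rfl, rfl⟩
    simpa [hds] using le_add_dwalkWeight_of_le_add_weight weight (fun _ _ => h.le_add_weight) s l hl
  · by_cases hu : d u = ⊤
    · simp [hu]
    obtain ⟨l, hl, hlast, hlw⟩ := h.exists_walk_dwalkWeight_eq hpos u hu
    exact sInf_le ⟨l, hl, hlast, hlw.symm⟩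
end

section
/- With strictly positive edge weights, the global relaxation fixed point of the previous context exists and is unique: there is exactly one function w : V → ℝ≥0 ∪ {∞} with w(s) = 0, w(u) = min over in-neighbors x of (w(x) + weight(x,u)) for u ≠ s reachable from s, and w(u) = ∞ for u unreachable from s. -/
/-!
The solution is the shortest-path distance `δ(u) = inf {cost of a walk s → u}`. It is a fixed
point because every walk to `u ≠ s` ends with an edge `x → u`. Any fixed point `d` satisfies
`d ≤ δ`, by induction along walks. Conversely, if `d u < δ u` somewhere, take such a `u` with
`d u` minimal. Then `d u < ⊤`, so `u` is reachable, `u ≠ s`, and by finiteness the infimum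
defining `d u` is attained at an in-neighbour `x`. Positivity of the weight gives `d x < d u`,
so `δ x ≤ d x` by minimality, hence `δ u ≤ δ x + weight x u ≤ d u`, a contradiction.
-/

open scoped ENNReal

namespace Relaxation

variable {V : Type*} (Adj : V → V → Prop) (weight : V → V → ℝ≥0∞) (s : V)

inductive WalkCost : V → ℝ≥0∞ → Prop
  | refl : WalkCost s 0
  | tail {x u : V} {c : ℝ≥0∞} : WalkCost x c → Adj x u → WalkCost u (c + weight x u)

noncomputable def shortestDist (u : V) : ℝ≥0∞ := sInf {c | WalkCost Adj weight s u c}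

noncomputable def relax (d : V → ℝ≥0∞) (u : V) : ℝ≥0∞ :=
  sInf {y | ∃ x, Adj x u ∧ y = d x + weight x u}

variable {Adj weight s}

lemma WalkCost.reflTransGen {u : V} {c : ℝ≥0∞} (h : WalkCost Adj weight s u c) :
    Relation.ReflTransGen Adj s u := by
  induction h with
  | refl => exact .refl
  | tail _ hxu ih => exact ih.tail hxu

lemma shortestDist_self : shortestDist Adj weight s s = 0 :=
  le_antisymm (sInf_le .refl) zero_le

lemma shortestDist_eq_top {u : V} (h : ¬ Relation.ReflTransGen Adj s u) :
    shortestDist Adj weight s u = ⊤ :=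
  eq_top_iff.2 <| le_sInf fun _ hc => absurd hc.reflTransGen h

lemma shortestDist_le_add {x u : V} (h : Adj x u) :
    shortestDist Adj weight s u ≤ shortestDist Adj weight s x + weight x u := by
  rw [shortestDist, shortestDist, ENNReal.sInf_add]
  exact le_iInf₂ fun c hc => sInf_le (hc.tail h)

lemma relax_le {d : V → ℝ≥0∞} {x u : V} (h : Adj x u) :
    relax Adj weight d u ≤ d x + weight x u :=
  sInf_le ⟨x, h, rfl⟩

lemma shortestDist_eq_relax {u : V} (hus : u ≠ s) :
    shortestDist Adj weight s u = relax Adj weight (shortestDist Adj weight s) u := by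
  refine le_antisymm (le_sInf fun y ⟨x, hxu, hy⟩ => hy ▸ shortestDist_le_add hxu) ?_
  refine le_sInf fun c hc => ?_
  cases hc with
  | refl => exact absurd rfl hus
  | tail hx hxu =>
    exact (relax_le hxu).trans (add_le_add_left (sInf_le hx) _)

lemma le_of_walkCost {d : V → ℝ≥0∞} (h0 : d s = 0)
    (hfix : ∀ u, u ≠ s → Relation.ReflTransGen Adj s u → d u = relax Adj weight d u)
    {u : V} {c : ℝ≥0∞} (hc : WalkCost Adj weight s u c) : d u ≤ c := by
  induction hc with
  | refl => exact h0.le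
  | @tail x u c hx hxu ih =>
    rcases eq_or_ne u s with rfl | hus
    · simp [h0]
    · rw [hfix u hus (hx.reflTransGen.tail hxu)]
      exact (relax_le hxu).trans (add_le_add_left ih _)

lemma le_shortestDist {d : V → ℝ≥0∞} (h0 : d s = 0)
    (hfix : ∀ u, u ≠ s → Relation.ReflTransGen Adj s u → d u = relax Adj weight d u)
    (u : V) : d u ≤ shortestDist Adj weight s u :=
  le_sInf fun _ => le_of_walkCost h0 hfix

lemma exists_relax_eq [Finite V] {d : V → ℝ≥0∞} {u : V} (h : relax Adj weight d u ≠ ⊤) :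
    ∃ x, Adj x u ∧ relax Adj weight d u = d x + weight x u := by
  have hS : {y | ∃ x, Adj x u ∧ y = d x + weight x u} =
      (fun x => d x + weight x u) '' {x | Adj x u} := by
    ext y
    simp [eq_comm]
  have hne : {y | ∃ x, Adj x u ∧ y = d x + weight x u}.Nonempty := by
    by_contra hempty
    rw [Set.not_nonempty_iff_eq_empty] at hempty
    exact h (by rw [relax, hempty, sInf_empty])
  exact hne.csInf_mem (hS ▸ (Set.toFinite _).image _)

lemma shortestDist_le [Finite V] (hpos : ∀ a b, Adj a b → 0 < weight a b)
    {d : V → ℝ≥0∞} (h0 : d s = 0)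
    (hfix : ∀ u, u ≠ s → Relation.ReflTransGen Adj s u → d u = relax Adj weight d u)
    (htop : ∀ u, ¬ Relation.ReflTransGen Adj s u → d u = ⊤)
    (u : V) : shortestDist Adj weight s u ≤ d u := by
  by_contra! hu
  obtain ⟨u, hu, hmin⟩ := Set.exists_min_image {v | d v < shortestDist Adj weight s v} d
    (Set.toFinite _) ⟨u, hu⟩
  have hus : u ≠ s := by
    rintro rfl
    simp [h0, shortestDist_self] at hu
  have hu_top : d u ≠ ⊤ := (hu.trans_le le_top).ne
  have hreach : Relation.ReflTransGen Adj s u := by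
    by_contra hnr
    exact hu_top (htop u hnr)
  have hdu := hfix u hus hreach
  obtain ⟨x, hxu, hx⟩ := exists_relax_eq (hdu ▸ hu_top)
  rw [← hdu] at hx
  have hx_top : d x ≠ ⊤ := fun h => hu_top (by rw [hx, h, top_add])
  have hxu_lt : d x < d u := hx ▸ ENNReal.lt_add_right hx_top (hpos x u hxu).ne'
  have hx_le : shortestDist Adj weight s x ≤ d x :=
    not_lt.1 fun hlt => (hmin x hlt).not_gt hxu_lt
  refine (hu.out.trans_le ?_).false
  calc shortestDist Adj weight s u ≤ shortestDist Adj weight s x + weight x u :=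
        shortestDist_le_add hxu
    _ ≤ d x + weight x u := by gcongr
    _ = d u := hx.symm

end Relaxation

open Relaxation

/-- Existence and uniqueness of the global relaxation fixed point: in a finite
directed graph with strictly positive edge weights and source `s`, there is
exactly one function `d : V → ℝ≥0∞` with `d s = 0`, satisfying the relaxation
fixed-point equation at every reachable `u ≠ s`, and `d u = ⊤` at every vertex
unreachable from `s`. -/
theorem relaxation_fixed_point_exists_unique
    {V : Type*} [Fintype V] (Adj : V → V → Prop) (weight : V → V → ENNReal)
    (hw : ∀ a b, Adj a b → 0 < weight a b ∧ weight a b ≠ ⊤)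
    (s : V) :
    ∃! d : V → ENNReal,
      d s = 0 ∧
      (∀ u, u ≠ s → Relation.ReflTransGen Adj s u →
        d u = sInf {y | ∃ x, Adj x u ∧ y = d x + weight x u}) ∧
      (∀ u, ¬ Relation.ReflTransGen Adj s u → d u = ⊤) := by
  refine ⟨shortestDist Adj weight s,
    ⟨shortestDist_self, fun u hus _ => shortestDist_eq_relax hus, fun u => shortestDist_eq_top⟩,
    fun d ⟨h0, hfix, htop⟩ => funext fun u => le_antisymm (le_shortestDist h0 hfix u) ?_⟩
  exact shortestDist_le (fun a b hab => (hw a b hab).1) h0 hfix htop u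
end
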